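/- Let the balanced Turán construction on n = 3k vertices (k ≥ 2) be given. If T is any 3-set of vertices that is a missing triangle of this construction, then there exists a fourth vertex v such that all three 3-subsets of T ∪ {v} other than T are triangles of the construction. -/
import Mathlib


/-- The triangle predicate of Turán's original construction: three (distinct) vertices
form a triangle iff they lie in three different parts, or two lie in one part and the
third lies in the part cyclically to its right (`c + 1`). -/
def TuranTri {V : Type*} (part : V → Fin 3) (x y z : V) : Prop :=
  (part x ≠ part y ∧ part x ≠ part z ∧ part y ≠ part z) ∨
  (part x = part y ∧ part z = part x + 1) ∨
  (part x = part z ∧ part y = part x + 1) ∨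
  (part y = part z ∧ part x = part y + 1)

lemma finTriHelper : ∀ p q r : Fin 3, ¬ TuranTri (id : Fin 3 → Fin 3) p q r →
    ∃ s : Fin 3, s ≠ p ∧ s ≠ q ∧ s ≠ r ∧ TuranTri (id : Fin 3 → Fin 3) s p q ∧
      TuranTri (id : Fin 3 → Fin 3) s p r ∧ TuranTri (id : Fin 3 → Fin 3) s q r := by
  unfold TuranTri
  simp only [id_eq]
  intro p q r h
  fin_cases p <;> fin_cases q <;> fin_cases r <;> revert h <;> decide

/-- In the balanced Turán construction on `n = 3k` vertices (`k ≥ 2`, three parts of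
size `k` arranged cyclically), every missing triangle `T = {x, y, z}` admits a fourth
vertex `v` such that all three 3-subsets of `T ∪ {v}` other than `T` are triangles of
the construction.  Hence adding any single triangle forces a set of four vertices all
four of whose 3-subsets are triangles. -/
theorem turan_construction_saturated {V : Type*} [Fintype V] [DecidableEq V]
    (k : ℕ) (hk : 2 ≤ k) (part : V → Fin 3)
    (hpart : ∀ c : Fin 3, (Finset.univ.filter (fun v => part v = c)).card = k)
    (x y z : V) (hxy : x ≠ y) (hxz : x ≠ z) (hyz : y ≠ z)
    (hmiss : ¬ TuranTri part x y z) :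
    ∃ v : V, v ≠ x ∧ v ≠ y ∧ v ≠ z ∧
      TuranTri part v x y ∧ TuranTri part v x z ∧ TuranTri part v y z := by
  obtain ⟨s, hsp, hsq, hsr, h1, h2, h3⟩ := finTriHelper (part x) (part y) (part z) hmiss
  have : 0 < (Finset.univ.filter (fun v => part v = s)).card := by
    rw [hpart s]; omega
  obtain ⟨v, hv⟩ := Finset.card_pos.mp this
  simp only [Finset.mem_filter] at hv
  refine ⟨v, ?_, ?_, ?_, ?_, ?_, ?_⟩
  · rintro rfl; exact hsp hv.2.symm
  · rintro rfl; exact hsq hv.2.symm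
  · rintro rfl; exact hsr hv.2.symm
  all_goals unfold TuranTri at *; rw [hv.2]; assumption
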